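/- arXiv:math/0304226 — 2 statements merged into one kernel-verified Lean document; each statement's English description precedes it below -/
import Mathlib

section
/- In the commutative differential graded algebra (Λ(x,y,u,v,t), d) with |x| = |y| = 2, |u| = |v| = |t| = 3, d(x) = d(y) = 0, d(u) = x², d(v) = y², d(t) = xy, the cohomology in degree 5 is spanned by the classes [tx − uy] and [ty − vx], and these classes are nonzero. -/
/-! In the Sullivan model `(Λ(x,y,u,v,t), d)` of the sphere tangent bundle of
`S² × S²`, with `|x| = |y| = 2`, `|u| = |v| = |t| = 3`, `du = x²`, `dv = y²`,
`dt = xy`, the degree 4, 5 and 6 parts have bases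
`{x², xy, y²}`, `{xu, xv, xt, yu, yv, yt}` and
`{x³, x²y, xy², y³, uv, ut, vt}` respectively.  We express the differentials
`d⁴ : Λ⁴ → Λ⁵ = 0` and `d⁵ : Λ⁵ → Λ⁶`
(`xu ↦ x³`, `xv ↦ xy²`, `xt ↦ x²y`, `yu ↦ x²y`, `yv ↦ y³`, `yt ↦ xy²`)
in these bases. -/

/-- `d⁵ : Λ⁵ → Λ⁶` in the bases `(xu, xv, xt, yu, yv, yt)` and
`(x³, x²y, xy², y³, uv, ut, vt)`. -/
noncomputable def d5 : (Fin 6 → ℚ) →ₗ[ℚ] (Fin 7 → ℚ) :=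
  Matrix.toLin' !![1, 0, 0, 0, 0, 0;
                   0, 0, 1, 1, 0, 0;
                   0, 1, 0, 0, 0, 1;
                   0, 0, 0, 0, 1, 0;
                   0, 0, 0, 0, 0, 0;
                   0, 0, 0, 0, 0, 0;
                   0, 0, 0, 0, 0, 0]

/-- `d⁴ : Λ⁴ → Λ⁵` is zero since `x², xy, y²` are cocycles. -/
noncomputable def d4 : (Fin 3 → ℚ) →ₗ[ℚ] (Fin 6 → ℚ) := 0

/-- The cocycle `tx − uy = xt − yu`. -/
noncomputable def txuy : Fin 6 → ℚ := Pi.single 2 1 - Pi.single 3 1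

/-- The cocycle `ty − vx = yt − xv`. -/
noncomputable def tyvx : Fin 6 → ℚ := Pi.single 5 1 - Pi.single 1 1

lemma d5_apply (v : Fin 6 → ℚ) : d5 v = ![v 0, v 2 + v 3, v 1 + v 5, v 4, 0, 0, 0] := by
  ext i
  fin_cases i <;> simp [d5, Matrix.mulVec, dotProduct, Fin.sum_univ_succ]

lemma mem_ker_d5_iff (v : Fin 6 → ℚ) :
    v ∈ LinearMap.ker d5 ↔ v 0 = 0 ∧ v 2 + v 3 = 0 ∧ v 1 + v 5 = 0 ∧ v 4 = 0 := by
  simp [d5_apply, funext_iff, Fin.forall_fin_succ]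

lemma ker_d5_eq_span : LinearMap.ker d5 = Submodule.span ℚ {txuy, tyvx} := by
  ext v
  rw [mem_ker_d5_iff, Submodule.mem_span_pair]
  constructor
  · rintro ⟨h0, h23, h15, h4⟩
    refine ⟨v 2, v 5, funext fun i => ?_⟩
    fin_cases i <;> simp [txuy, tyvx] <;> linarith
  · rintro ⟨a, b, rfl⟩
    simp [txuy, tyvx]

lemma txuy_ne_zero : txuy ≠ 0 := fun h => by simpa [txuy] using congrFun h 2

lemma tyvx_ne_zero : tyvx ≠ 0 := fun h => by simpa [tyvx] using congrFun h 5

/-- The degree-5 cohomology of `(Λ(x,y,u,v,t), d)` is spanned by the classes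
of `tx − uy` and `ty − vx`, and these classes are nonzero: the kernel of `d⁵`
is spanned by `tx − uy` and `ty − vx`, and neither lies in the image of `d⁴`. -/
theorem degree_five_cohomology :
    Submodule.span ℚ {txuy, tyvx} = LinearMap.ker d5 ∧
      txuy ∉ LinearMap.range d4 ∧ tyvx ∉ LinearMap.range d4 := by
  rw [d4, LinearMap.range_zero, Submodule.mem_bot, Submodule.mem_bot]
  exact ⟨ker_d5_eq_span.symm, txuy_ne_zero, tyvx_ne_zero⟩
end

section
/- Let A be a graded-commutative algebra over a field k. In the free graded-commutative algebra Λ(x_{st}) on generators x_{st} of degree m−1 for 1 ≤ s ≠ t ≤ n, consider the ideal relations x_{st} − (−1)^m x_{ts} and x_{st}x_{su} + x_{su}x_{ut} + x_{us}x_{ut} and x_{st}² = 0. Then the subspace R spanned by monomials x_{i_1 j_1}⋯x_{i_r j_r} with i_s < j_s for all s and j_1 < j_2 < … < j_r maps onto the quotient algebra: every monomial in the x_{st} is congruent modulo the relations to a linear combination of such monomials. -/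
/-- The Arnold-type relations among the generators `x_{st}` (degree `m − 1`)
of the free graded-commutative algebra `Λ(x_{st})`:
graded commutativity of the generators, `x_{ts} = (−1)^m x_{st}`,
`x_{st}² = 0`, and `x_{st}x_{su} + x_{su}x_{ut} + x_{us}x_{ut} = 0`. -/
inductive ArnoldRel (k : Type*) [Field k] (n m : ℕ) :
    FreeAlgebra k (Fin n × Fin n) → FreeAlgebra k (Fin n × Fin n) → Prop
  | gradedComm (s t u v : Fin n) :
      ArnoldRel k n m (FreeAlgebra.ι k (s, t) * FreeAlgebra.ι k (u, v))
        (((-1 : k) ^ ((m - 1) * (m - 1))) • (FreeAlgebra.ι k (u, v) * FreeAlgebra.ι k (s, t)))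
  | symm (s t : Fin n) :
      ArnoldRel k n m (FreeAlgebra.ι k (t, s)) (((-1 : k) ^ m) • FreeAlgebra.ι k (s, t))
  | sq (s t : Fin n) :
      ArnoldRel k n m (FreeAlgebra.ι k (s, t) * FreeAlgebra.ι k (s, t)) 0
  | arnold (s t u : Fin n) :
      ArnoldRel k n m
        (FreeAlgebra.ι k (s, t) * FreeAlgebra.ι k (s, u)
          + FreeAlgebra.ι k (s, u) * FreeAlgebra.ι k (u, t)
          + FreeAlgebra.ι k (u, s) * FreeAlgebra.ι k (u, t)) 0

/-- The image of the generator `x_{st}` in the quotient algebra. -/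
noncomputable def xcl (k : Type*) [Field k] (n m : ℕ) (p : Fin n × Fin n) :
    RingQuot (ArnoldRel k n m) :=
  RingQuot.mkAlgHom k (ArnoldRel k n m) (FreeAlgebra.ι k p)

/-- The set of "admissible" monomials `x_{i₁j₁} ⋯ x_{i_rj_r}` with
`i_s < j_s` for all `s` and `j₁ < j₂ < … < j_r` (including the empty
monomial `1`). -/
noncomputable def admissibleMonomials (k : Type*) [Field k] (n m : ℕ) :
    Set (RingQuot (ArnoldRel k n m)) :=
  { y | ∃ (r : ℕ) (ind : Fin r → Fin n × Fin n),
      (∀ l, (ind l).1 < (ind l).2) ∧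
      (∀ l l' : Fin r, l < l' → (ind l).2 < (ind l').2) ∧
      y = (List.ofFn fun l => xcl k n m (ind l)).prod }

section
variable {k : Type*} [Field k] {n m : ℕ}

lemma xc_comm (s t u v : Fin n) :
    xcl k n m (s, t) * xcl k n m (u, v) =
      ((-1 : k) ^ ((m - 1) * (m - 1))) • (xcl k n m (u, v) * xcl k n m (s, t)) := by
  have := RingQuot.mkAlgHom_rel k (ArnoldRel.gradedComm (k := k) (n := n) (m := m) s t u v)
  simpa [xcl, map_mul, map_smul] using this

lemma xc_symm (s t : Fin n) :
    xcl k n m (t, s) = ((-1 : k) ^ m) • xcl k n m (s, t) := by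
  have := RingQuot.mkAlgHom_rel k (ArnoldRel.symm (k := k) (n := n) (m := m) s t)
  simpa [xcl, map_smul] using this

lemma xc_sq (s t : Fin n) : xcl k n m (s, t) * xcl k n m (s, t) = 0 := by
  have := RingQuot.mkAlgHom_rel k (ArnoldRel.sq (k := k) (n := n) (m := m) s t)
  simpa [xcl, map_mul] using this

lemma xc_arnold (s t u : Fin n) :
    xcl k n m (s, t) * xcl k n m (s, u) + xcl k n m (s, u) * xcl k n m (u, t)
      + xcl k n m (u, s) * xcl k n m (u, t) = 0 := by
  have := RingQuot.mkAlgHom_rel k (ArnoldRel.arnold (k := k) (n := n) (m := m) s t u)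
  simpa [xcl, map_mul, map_add] using this

lemma xc_merge (s t j : Fin n) :
    xcl k n m (s, j) * xcl k n m (t, j) =
      (-(((-1 : k) ^ m) + 1)) • (xcl k n m (t, j) * xcl k n m (t, s)) := by
  have hσ : ((-1 : k) ^ m) * ((-1 : k) ^ m) = 1 := by
    rw [← pow_add, ← two_mul, pow_mul]; norm_num
  have h1 : xcl k n m (s, j) = ((-1 : k) ^ m) • xcl k n m (j, s) := xc_symm j s
  have h2 : xcl k n m (t, j) = ((-1 : k) ^ m) • xcl k n m (j, t) := xc_symm j t
  have ha := xc_arnold (k := k) (m := m) j s t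
  have h2' : xcl k n m (j, t) = ((-1 : k) ^ m) • xcl k n m (t, j) := by
    rw [h2, smul_smul, hσ, one_smul]
  have hb : xcl k n m (j, t) * xcl k n m (t, s)
      = ((-1 : k) ^ m) • (xcl k n m (t, j) * xcl k n m (t, s)) := by
    rw [h2', smul_mul_assoc]
  have h4 : xcl k n m (j, s) * xcl k n m (j, t)
      + ((-1 : k) ^ m + 1) • (xcl k n m (t, j) * xcl k n m (t, s)) = 0 := by
    rw [add_smul, one_smul, ← hb, ← ha]; abel
  have h3 : xcl k n m (j, s) * xcl k n m (j, t)
      = -(((-1 : k) ^ m + 1) • (xcl k n m (t, j) * xcl k n m (t, s))) :=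
    eq_neg_of_add_eq_zero_left h4
  calc xcl k n m (s, j) * xcl k n m (t, j)
      = ((-1 : k) ^ m * (-1 : k) ^ m) • (xcl k n m (j, s) * xcl k n m (j, t)) := by
        rw [h1, h2, smul_mul_assoc, mul_smul_comm, smul_smul]
    _ = xcl k n m (j, s) * xcl k n m (j, t) := by rw [hσ, one_smul]
    _ = -(((-1 : k) ^ m + 1) • (xcl k n m (t, j) * xcl k n m (t, s))) := h3
    _ = (-(((-1 : k) ^ m) + 1)) • (xcl k n m (t, j) * xcl k n m (t, s)) :=
      (neg_smul ((-1 : k) ^ m + 1) (xcl k n m (t, j) * xcl k n m (t, s))).symm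


variable {k : Type*} [Field k] {n m : ℕ}

def wsum (L : List (Fin n × Fin n)) : ℕ := (L.map fun p => (p.2 : ℕ)).sum

def nu : List (Fin n × Fin n) → ℕ
  | [] => 0
  | _ :: T => wsum T + nu T

lemma wsum_append (P Q : List (Fin n × Fin n)) : wsum (P ++ Q) = wsum P + wsum Q := by
  simp [wsum]

lemma wsum_cons (p : Fin n × Fin n) (T : List (Fin n × Fin n)) :
    wsum (p :: T) = (p.2 : ℕ) + wsum T := by simp [wsum]

lemma nu_append (P Q : List (Fin n × Fin n)) :
    nu (P ++ Q) = nu P + P.length * wsum Q + nu Q := by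
  induction P with
  | nil => simp [nu]
  | cons p T ih => simp [nu, wsum_append, ih]; ring

lemma wsum_le (L : List (Fin n × Fin n)) : wsum L ≤ L.length * n := by
  induction L with
  | nil => simp [wsum]
  | cons p T ih =>
      rw [wsum_cons]
      have : (p.2 : ℕ) < n := p.2.isLt
      simp only [List.length_cons]
      calc (p.2:ℕ) + wsum T ≤ n + T.length * n := by omega
        _ = (T.length + 1) * n := by ring

lemma nu_le (L : List (Fin n × Fin n)) : nu L ≤ L.length * L.length * n := by
  induction L with
  | nil => simp [nu]
  | cons p T ih =>
      have h1 := wsum_le (n := n) T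
      simp only [nu, List.length_cons]
      calc wsum T + nu T ≤ T.length * n + T.length * T.length * n := by omega
        _ ≤ (T.length + 1) * (T.length + 1) * n := by nlinarith

def meas (L : List (Fin n × Fin n)) : ℕ :=
  wsum L * (L.length * L.length * n + 1) + (L.length * L.length * n - nu L)

lemma meas_lt_of_wsum_lt {L L' : List (Fin n × Fin n)} (hlen : L'.length = L.length)
    (hw : wsum L' < wsum L) : meas L' < meas L := by
  unfold meas
  rw [hlen]
  set B := L.length * L.length * n with hB
  calc wsum L' * (B + 1) + (B - nu L') ≤ wsum L' * (B + 1) + B := by omega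
    _ < (wsum L' + 1) * (B + 1) := by nlinarith
    _ ≤ wsum L * (B + 1) := Nat.mul_le_mul_right _ hw
    _ ≤ wsum L * (B + 1) + (B - nu L) := Nat.le_add_right _ _

lemma meas_lt_of_nu_lt {L L' : List (Fin n × Fin n)} (hlen : L'.length = L.length)
    (hw : wsum L' = wsum L) (hn : nu L < nu L') : meas L' < meas L := by
  have h2 : nu L' ≤ L.length * L.length * n := hlen ▸ nu_le L'
  unfold meas
  rw [hlen, hw]
  omega

lemma not_chain'_decomp {α : Type*} {R : α → α → Prop} :
    ∀ (l : List α), ¬ l.Chain' R → ∃ P a b Q, l = P ++ a :: b :: Q ∧ ¬ R a b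
  | [] => fun h => absurd List.isChain_nil h
  | [x] => fun h => absurd (List.isChain_singleton x) h
  | x :: y :: t => fun h => by
      change ¬ List.IsChain R (x :: y :: t) at h
      rw [List.isChain_cons_cons] at h
      by_cases hR : R x y
      · have h2 : ¬ (y :: t).Chain' R := fun hc => h ⟨hR, hc⟩
        obtain ⟨P, a, b, Q, hEq, hab⟩ := not_chain'_decomp (y :: t) h2
        exact ⟨x :: P, a, b, Q, by rw [hEq, List.cons_append], hab⟩
      · exact ⟨[], x, y, t, rfl, hR⟩

end

section
variable {k : Type*} [Field k] {n m : ℕ}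

lemma prod_rw (P Q : List (Fin n × Fin n)) (a b a' b' : Fin n × Fin n) (c : k)
    (h : xcl k n m a * xcl k n m b = c • (xcl k n m a' * xcl k n m b')) :
    ((P ++ a :: b :: Q).map (xcl k n m)).prod
      = c • ((P ++ a' :: b' :: Q).map (xcl k n m)).prod := by
  simp only [List.map_append, List.prod_append, List.map_cons, List.prod_cons]
  rw [← mul_assoc (xcl k n m a) (xcl k n m b), h, smul_mul_assoc, mul_assoc, mul_smul_comm]

lemma prod_zero (P Q : List (Fin n × Fin n)) (a b : Fin n × Fin n)
    (h : xcl k n m a * xcl k n m b = 0) :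
    ((P ++ a :: b :: Q).map (xcl k n m)).prod = 0 := by
  simp only [List.map_append, List.prod_append, List.map_cons, List.prod_cons]
  rw [← mul_assoc (xcl k n m a) (xcl k n m b), h]
  simp

lemma adm_mem (J : List (Fin n × Fin n)) (h1 : ∀ p ∈ J, p.1 < p.2)
    (h2 : J.Pairwise fun p q => p.2 < q.2) :
    (J.map (xcl k n m)).prod ∈ admissibleMonomials k n m := by
  refine ⟨J.length, J.get, fun l => h1 _ (J.get_mem l), 
    fun l l' h => List.pairwise_iff_get.mp h2 l l' h, ?_⟩
  have : (List.ofFn fun l => xcl k n m (J.get l)) = (List.ofFn J.get).map (xcl k n m) :=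
    (List.map_ofFn (f := J.get) (g := xcl k n m)).symm
  rw [this, List.ofFn_get]

end

section
variable {k : Type*} [Field k] {n m : ℕ}

lemma nu_swap_lt (P Q : List (Fin n × Fin n)) {a b : Fin n × Fin n} (h : b.2 < a.2) :
    nu (P ++ a :: b :: Q) < nu (P ++ b :: a :: Q) := by
  have hv : (b.2 : ℕ) < (a.2 : ℕ) := h
  simp only [nu_append, nu, wsum_cons]
  rw [show ((a.2 : ℕ) + ((b.2 : ℕ) + wsum Q)) = ((b.2 : ℕ) + ((a.2 : ℕ) + wsum Q)) from by omega]
  omega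

lemma main_span : ∀ (L : List (Fin n × Fin n)), (∀ p ∈ L, p.1 < p.2) →
    (L.map (xcl k n m)).prod ∈ Submodule.span k (admissibleMonomials k n m) := by
  have key : ∀ N (L : List (Fin n × Fin n)), meas (n := n) L = N → (∀ p ∈ L, p.1 < p.2) →
      (L.map (xcl k n m)).prod ∈ Submodule.span k (admissibleMonomials k n m) := by
    intro N
    induction N using Nat.strong_induction_on with
    | _ N IH =>
      intro L hN hL
      by_cases hc : L.Chain' (fun a b : Fin n × Fin n => a.2 < b.2)
      · haveI : IsTrans (Fin n × Fin n) (fun a b => a.2 < b.2) :=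
          ⟨fun _ _ _ h1 h2 => lt_trans h1 h2⟩
        exact Submodule.subset_span (adm_mem L hL (List.isChain_iff_pairwise.mp hc))
      · obtain ⟨P, a, b, Q, rfl, hab⟩ := not_chain'_decomp _ hc
        have hble : b.2 ≤ a.2 := le_of_not_gt hab
        have hmemP : ∀ p ∈ P, p.1 < p.2 := fun p hp => hL p (by simp [hp])
        have hmemQ : ∀ p ∈ Q, p.1 < p.2 := fun p hp => hL p (by simp [hp])
        have ha' : a.1 < a.2 := hL a (by simp)
        have hb' : b.1 < b.2 := hL b (by simp)
        rcases lt_or_eq_of_le hble with hlt | heq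
        · -- swap case
          have hx : xcl k n m a * xcl k n m b
              = ((-1 : k) ^ ((m - 1) * (m - 1))) • (xcl k n m b * xcl k n m a) :=
            xc_comm a.1 a.2 b.1 b.2
          rw [prod_rw P Q a b b a _ hx]
          have hml : meas (n := n) (P ++ b :: a :: Q) < N := by
            rw [← hN]
            apply meas_lt_of_nu_lt
            · simp
            · simp only [wsum_append, wsum_cons]; omega
            · exact nu_swap_lt P Q hlt
          refine Submodule.smul_mem _ _ (IH _ hml _ rfl ?_)
          intro p hp
          rcases List.mem_append.mp hp with h | h
          · exact hmemP p h
          · rcases List.mem_cons.mp h with rfl | h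
            · exact hb'
            · rcases List.mem_cons.mp h with rfl | h
              · exact ha'
              · exact hmemQ p h
        · -- merge case : b.2 = a.2
          have hbeq : b = (b.1, a.2) := by rw [← heq]
          by_cases hfst : a.1 = b.1
          · have hab' : a = b := Prod.ext hfst heq.symm
            rw [prod_zero P Q a b (by rw [hab']; exact xc_sq b.1 b.2)]
            exact Submodule.zero_mem _
          · have hm : xcl k n m a * xcl k n m b
                = (-(((-1 : k) ^ m) + 1)) • (xcl k n m (b.1, a.2) * xcl k n m (b.1, a.1)) := by
              rw [hbeq]; exact xc_merge a.1 b.1 a.2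
            have hb1 : (b.1 : ℕ) < (a.2 : ℕ) := heq ▸ hb'
            have ha1 : (a.1 : ℕ) < (a.2 : ℕ) := ha'
            rcases lt_or_gt_of_ne hfst with hlt1 | hlt1
            · -- a.1 < b.1 : new pair (a.1, b.1)
              have hx : xcl k n m a * xcl k n m b
                  = ((-(((-1 : k) ^ m) + 1)) * ((-1 : k) ^ m)) •
                      (xcl k n m (b.1, a.2) * xcl k n m (a.1, b.1)) := by
                rw [hm, xc_symm a.1 b.1, mul_smul_comm, smul_smul]
              rw [prod_rw P Q a b (b.1, a.2) (a.1, b.1) _ hx]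
              have hml : meas (n := n) (P ++ (b.1, a.2) :: (a.1, b.1) :: Q) < N := by
                rw [← hN]
                apply meas_lt_of_wsum_lt
                · simp
                · simp only [wsum_append, wsum_cons]
                  have : (b.2 : ℕ) = (a.2 : ℕ) := by rw [heq]
                  omega
              refine Submodule.smul_mem _ _ (IH _ hml _ rfl ?_)
              intro p hp
              rcases List.mem_append.mp hp with h | h
              · exact hmemP p h
              · rcases List.mem_cons.mp h with rfl | h
                · exact heq ▸ hb'
                · rcases List.mem_cons.mp h with rfl | h
                  · exact hlt1
                  · exact hmemQ p h
            · -- b.1 < a.1 : new pair (b.1, a.1)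
              rw [prod_rw P Q a b (b.1, a.2) (b.1, a.1) _ hm]
              have hml : meas (n := n) (P ++ (b.1, a.2) :: (b.1, a.1) :: Q) < N := by
                rw [← hN]
                apply meas_lt_of_wsum_lt
                · simp
                · simp only [wsum_append, wsum_cons]
                  have : (b.2 : ℕ) = (a.2 : ℕ) := by rw [heq]
                  omega
              refine Submodule.smul_mem _ _ (IH _ hml _ rfl ?_)
              intro p hp
              rcases List.mem_append.mp hp with h | h
              · exact hmemP p h
              · rcases List.mem_cons.mp h with rfl | h
                · exact heq ▸ hb'
                · rcases List.mem_cons.mp h with rfl | h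
                  · exact hlt1
                  · exact hmemQ p h
  exact fun L hL => key (meas L) L rfl hL

lemma norm_pair (p : Fin n × Fin n) (hp : p.1 ≠ p.2) :
    ∃ (c : k) (q : Fin n × Fin n), q.1 < q.2 ∧ xcl k n m p = c • xcl k n m q := by
  rcases lt_or_gt_of_ne hp with h | h
  · exact ⟨1, p, h, (one_smul k _).symm⟩
  · exact ⟨(-1 : k) ^ m, (p.2, p.1), h, xc_symm p.2 p.1⟩

lemma norm_list : ∀ (L : List (Fin n × Fin n)), (∀ p ∈ L, p.1 ≠ p.2) →
    ∃ (c : k) (L' : List (Fin n × Fin n)), (∀ p ∈ L', p.1 < p.2) ∧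
      (L.map (xcl k n m)).prod = c • (L'.map (xcl k n m)).prod := by
  intro L
  induction L with
  | nil => exact fun _ => ⟨1, [], by simp, by simp⟩
  | cons p T ih =>
    intro h
    obtain ⟨c, T', hT', hTeq⟩ := ih (fun q hq => h q (by simp [hq]))
    obtain ⟨cp, q, hq, hpeq⟩ := norm_pair (k := k) (m := m) p (h p (by simp))
    refine ⟨cp * c, q :: T', ?_, ?_⟩
    · intro r hr
      rcases List.mem_cons.mp hr with rfl | hr
      · exact hq
      · exact hT' r hr
    · simp only [List.map_cons, List.prod_cons, hTeq, hpeq, smul_mul_assoc, mul_smul_comm,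
        smul_smul, mul_comm c cp]

end


/-- In the quotient of `Λ(x_{st})` by the Arnold relations, every monomial in
the `x_{st}` (for `s ≠ t`) is congruent, modulo the relations, to a linear
combination of admissible monomials `x_{i₁j₁} ⋯ x_{i_rj_r}` with `i_s < j_s`
and `j₁ < ⋯ < j_r`. -/
theorem monomials_spanned_by_admissible
    (k : Type*) [Field k] (n m : ℕ)
    (r : ℕ) (ind : Fin r → Fin n × Fin n) (hne : ∀ l, (ind l).1 ≠ (ind l).2) :
    (List.ofFn fun l => xcl k n m (ind l)).prod ∈
      Submodule.span k (admissibleMonomials k n m) := by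
  have h1 : (List.ofFn fun l => xcl k n m (ind l)) = (List.ofFn ind).map (xcl k n m) :=
    (List.map_ofFn (f := ind) (g := xcl k n m)).symm
  rw [h1]
  have h2 : ∀ p ∈ List.ofFn ind, p.1 ≠ p.2 := by
    intro p hp
    rw [List.mem_ofFn] at hp
    obtain ⟨l, rfl⟩ := hp
    exact hne l
  obtain ⟨c, L', hL', heq⟩ := norm_list (k := k) (m := m) _ h2
  rw [heq]
  exact Submodule.smul_mem _ _ (main_span L' hL')
end
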